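/- Let X, Y be real random variables with Var(X) = Var(Y) = σ² > 0, correlation ρ, and μ = E[X − Y] ≥ 0. Let D, D' be i.i.d. copies of X − Y (over independent users). Then P({D > 0, D' < 0} ∪ {D < 0, D' > 0}) ≤ 4σ²(1 − ρ)/(μ² + 2σ²(1 − ρ)). -/

import Mathlib

/-!
A sign disagreement between `D` and `D'` forces one of them to be negative, so by the union
bound its probability is at most `2 P(X - Y < 0)`. Since `Var(X - Y) = 2σ²(1 - ρ)` and
`E(X - Y) = μ ≥ 0`, Cantelli's inequality bounds `P(X - Y < 0)` by
`2σ²(1 - ρ) / (μ² + 2σ²(1 - ρ))`.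
-/

open MeasureTheory ProbabilityTheory

/-- Covariance of two real random variables. -/
noncomputable def cov {Ω : Type*} [MeasureSpace Ω] (X Y : Ω → ℝ) : ℝ :=
  ∫ ω, (X ω - ∫ ω', X ω') * (Y ω - ∫ ω', Y ω')

namespace ProbabilityTheory

variable {Ω : Type*} {mΩ : MeasurableSpace Ω} {μ : Measure Ω} [IsProbabilityMeasure μ]
  {X : Ω → ℝ}

lemma integral_sub_const_sq (hX : MemLp X 2 μ) (c : ℝ) :
    ∫ ω, (X ω - c) ^ 2 ∂μ = Var[X; μ] + (μ[X] - c) ^ 2 := by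
  have hXc : MemLp (fun ω ↦ X ω - c) 2 μ := hX.sub (memLp_const c)
  have := variance_eq_sub hXc
  rw [variance_sub_const hX.aestronglyMeasurable, integral_sub (hX.integrable one_le_two)
    (integrable_const c), integral_const, probReal_univ, one_smul] at this
  simp only [Pi.pow_apply] at this
  linarith

/-- Cantelli's one-sided Chebyshev inequality. -/
lemma measureReal_le_integral_sub_le_variance_div (hX : MemLp X 2 μ) {t : ℝ} (ht : 0 < t) :
    μ.real {ω | X ω ≤ μ[X] - t} ≤ Var[X; μ] / (Var[X; μ] + t ^ 2) := by
  set v := Var[X; μ]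
  have hv : 0 ≤ v := variance_nonneg X μ
  -- shifting by `s = v / t` before applying Markov's inequality to the square is optimal
  set s := v / t
  have hs : 0 ≤ s := div_nonneg hv ht.le
  have hsub : {ω | X ω ≤ μ[X] - t} ⊆ {ω | (t + s) ^ 2 ≤ (X ω - (μ[X] + s)) ^ 2} := by
    intro ω (hω : X ω ≤ μ[X] - t)
    change (t + s) ^ 2 ≤ (X ω - (μ[X] + s)) ^ 2
    nlinarith
  have hXs : MemLp (fun ω ↦ X ω - (μ[X] + s)) 2 μ := hX.sub (memLp_const _)
  have hmarkov := mul_meas_ge_le_integral_of_nonneg (ae_of_all _ fun ω ↦ sq_nonneg _)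
    hXs.integrable_sq ((t + s) ^ 2)
  rw [integral_sub_const_sq hX] at hmarkov
  have hts : 0 < t + s := by positivity
  calc μ.real {ω | X ω ≤ μ[X] - t}
      ≤ μ.real {ω | (t + s) ^ 2 ≤ (X ω - (μ[X] + s)) ^ 2} := measureReal_mono hsub
    _ ≤ (v + s ^ 2) / (t + s) ^ 2 := by
      rw [le_div_iff₀ (by positivity)]; linarith
    _ = v / (v + t ^ 2) := by
      have hst : s * t = v := div_mul_cancel₀ v ht.ne'
      rw [div_eq_div_iff (by positivity) (by positivity)]
      linear_combination (s * t - v) * hst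

lemma measureReal_neg_le_variance_div (hX : MemLp X 2 μ) (hmean : 0 ≤ μ[X])
    (hpos : 0 < μ[X] ^ 2 + Var[X; μ]) :
    μ.real {ω | X ω < 0} ≤ Var[X; μ] / (μ[X] ^ 2 + Var[X; μ]) := by
  rcases hmean.eq_or_lt with hzero | hmean
  · rw [← hzero, zero_pow two_ne_zero, zero_add] at hpos ⊢
    rw [div_self hpos.ne']
    exact measureReal_le_one
  · calc μ.real {ω | X ω < 0} ≤ μ.real {ω | X ω ≤ μ[X] - μ[X]} :=
          measureReal_mono fun ω (hω : X ω < 0) ↦ show X ω ≤ μ[X] - μ[X] by linarith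
      _ ≤ Var[X; μ] / (μ[X] ^ 2 + Var[X; μ]) := by
          rw [add_comm]
          exact measureReal_le_integral_sub_le_variance_div hX hmean

end ProbabilityTheory

lemma MeasureTheory.measureReal_opposite_signs_le {Ω : Type*} {mΩ : MeasurableSpace Ω}
    {μ : Measure Ω} [IsFiniteMeasure μ] (D D' : Ω → ℝ) :
    μ.real ({ω | D ω > 0 ∧ D' ω < 0} ∪ {ω | D ω < 0 ∧ D' ω > 0}) ≤
      μ.real {ω | D ω < 0} + μ.real {ω | D' ω < 0} := by
  rw [add_comm]
  exact (measureReal_union_le _ _).trans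
    (add_le_add (measureReal_mono fun ω h ↦ h.2) (measureReal_mono fun ω h ↦ h.1))

lemma ProbabilityTheory.IdentDistrib.measureReal_neg_eq {Ω Ω' : Type*} {mΩ : MeasurableSpace Ω}
    {mΩ' : MeasurableSpace Ω'} {μ : Measure Ω} {ν : Measure Ω'} {f : Ω → ℝ} {g : Ω' → ℝ}
    (h : IdentDistrib f g μ ν) : μ.real {ω | f ω < 0} = ν.real {ω | g ω < 0} :=
  congrArg ENNReal.toReal (h.measure_mem_eq measurableSet_Iio)

theorem rank_reversal_bound_of_correlation_general
    {Ω : Type*} [MeasureSpace Ω] [IsProbabilityMeasure (ℙ : Measure Ω)]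
    (X Y : Ω → ℝ) (hX : MemLp X 2) (hY : MemLp Y 2)
    (σ2 : ℝ) (hσ2 : 0 < σ2)
    (hvarX : variance X ℙ = σ2) (hvarY : variance Y ℙ = σ2)
    (ρ : ℝ) (hρ : ρ = cov X Y / σ2)
    (μ : ℝ) (hμ : μ = ∫ ω, (X ω - Y ω)) (hμ0 : 0 ≤ μ)
    (hpos : 0 < μ ^ 2 + 2 * σ2 * (1 - ρ))
    (D D' : Ω → ℝ)
    (hDid : IdentDistrib D (X - Y) ℙ ℙ) (hD'id : IdentDistrib D' (X - Y) ℙ ℙ) :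
    (ℙ ({ω | D ω > 0 ∧ D' ω < 0} ∪ {ω | D ω < 0 ∧ D' ω > 0})).toReal ≤
      4 * σ2 * (1 - ρ) / (μ ^ 2 + 2 * σ2 * (1 - ρ)) := by
  have hmean : ℙ[X - Y] = μ := hμ.symm
  have hvar : Var[X - Y; ℙ] = 2 * σ2 * (1 - ρ) := by
    rw [variance_sub hX hY, hvarX, hvarY, show cov[X, Y; ℙ] = ρ * σ2 by
      rw [hρ, div_mul_cancel₀ _ hσ2.ne']; rfl]
    ring
  have hcantelli := measureReal_neg_le_variance_div (hX.sub hY) (hmean ▸ hμ0)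
    (by rwa [hmean, hvar])
  rw [hmean, hvar] at hcantelli
  calc _ ≤ _ := measureReal_opposite_signs_le D D'
    _ ≤ 2 * σ2 * (1 - ρ) / (μ ^ 2 + 2 * σ2 * (1 - ρ)) +
          2 * σ2 * (1 - ρ) / (μ ^ 2 + 2 * σ2 * (1 - ρ)) := by
      rw [hDid.measureReal_neg_eq, hD'id.measureReal_neg_eq]
      exact add_le_add hcantelli hcantelli
    _ = 4 * σ2 * (1 - ρ) / (μ ^ 2 + 2 * σ2 * (1 - ρ)) := by ring

/-- High correlation suppresses cross-user rank reversals: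
for X, Y with Var X = Var Y = σ², correlation ρ, μ = E[X − Y] ≥ 0 and D, D'
i.i.d. copies of X − Y, the rank-reversal probability is at most
4σ²(1 − ρ)/(μ² + 2σ²(1 − ρ)). -/
theorem rank_reversal_bound_of_correlation
    {Ω : Type*} [MeasureSpace Ω] [IsProbabilityMeasure (ℙ : Measure Ω)]
    (X Y : Ω → ℝ) (hX : MemLp X 2) (hY : MemLp Y 2)
    (σ2 : ℝ) (hσ2 : 0 < σ2)
    (hvarX : variance X ℙ = σ2) (hvarY : variance Y ℙ = σ2)
    (ρ : ℝ) (hρ : ρ = cov X Y / σ2)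
    (μ : ℝ) (hμ : μ = ∫ ω, (X ω - Y ω)) (hμ0 : 0 ≤ μ)
    (hpos : 0 < μ ^ 2 + 2 * σ2 * (1 - ρ))
    (D D' : Ω → ℝ) (hD : Measurable D) (hD' : Measurable D')
    (hDid : IdentDistrib D (X - Y) ℙ ℙ) (hD'id : IdentDistrib D' (X - Y) ℙ ℙ)
    (hindep : IndepFun D D' ℙ) :
    (ℙ ({ω | D ω > 0 ∧ D' ω < 0} ∪ {ω | D ω < 0 ∧ D' ω > 0})).toReal ≤
      4 * σ2 * (1 - ρ) / (μ ^ 2 + 2 * σ2 * (1 - ρ)) :=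
  rank_reversal_bound_of_correlation_general X Y hX hY σ2 hσ2 hvarX hvarY ρ hρ μ hμ hμ0 hpos D D'
    hDid hD'id
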